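/- Let Δ⁺ ⊂ ℝ² be the polytope with vertices (0,0), (3,3), (3,0), (3/2,-3/2) and μ(x,y) = (x²-y²)². Then the barycenter b of Δ⁺ with respect to μ dp does NOT lie in the cone (2,0) + Cone((1,1),(1,-1)). -/

import Mathlib

open MeasureTheory Set

/-- The quadrilateral with vertices (0,0), (3,3), (3,0), (3/2,-3/2) in ℝ²
(the second SO₄ polytope in the paper's list). -/
noncomputable def delta18 : Set (ℝ × ℝ) :=
  convexHull ℝ {((0:ℝ), (0:ℝ)), ((3:ℝ), (3:ℝ)), ((3:ℝ), (0:ℝ)), ((3/2:ℝ), (-3/2:ℝ))}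

/-- The Duistermaat–Heckman density `(x² - y²)²`. -/
noncomputable def mu18 (p : ℝ × ℝ) : ℝ := (p.1 ^ 2 - p.2 ^ 2) ^ 2


/-- interval integral of a canonical degree-6 polynomial -/
lemma intpoly (a b c0 c1 c2 c3 c4 c5 c6 : ℝ) :
    (∫ x in a..b, (c0 + c1*x + c2*x^2 + c3*x^3 + c4*x^4 + c5*x^5 + c6*x^6))
      = (c0*b + c1*b^2/2 + c2*b^3/3 + c3*b^4/4 + c4*b^5/5 + c5*b^6/6 + c6*b^7/7)
        - (c0*a + c1*a^2/2 + c2*a^3/3 + c3*a^4/4 + c4*a^5/5 + c5*a^6/6 + c6*a^7/7) := by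
  have h : ∀ x : ℝ, HasDerivAt
      (fun x : ℝ => c0*x + c1*x^2/2 + c2*x^3/3 + c3*x^4/4 + c4*x^5/5 + c5*x^6/6 + c6*x^7/7)
      (c0 + c1*x + c2*x^2 + c3*x^3 + c4*x^4 + c5*x^5 + c6*x^6) x := by
    intro x
    have H := ((((((((hasDerivAt_pow 1 x).const_mul (c0/1)).add
      ((hasDerivAt_pow 2 x).const_mul (c1/2))).add
      ((hasDerivAt_pow 3 x).const_mul (c2/3))).add
      ((hasDerivAt_pow 4 x).const_mul (c3/4))).add
      ((hasDerivAt_pow 5 x).const_mul (c4/5))).add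
      ((hasDerivAt_pow 6 x).const_mul (c5/6))).add
      ((hasDerivAt_pow 7 x).const_mul (c6/7)))
    refine (H.congr_deriv (by push_cast; ring)).congr_of_eventuallyEq
      (Filter.Eventually.of_forall fun y => ?_)
    simp only [Pi.add_apply]; push_cast; ring
  rw [intervalIntegral.integral_eq_sub_of_hasDerivAt (fun x _ => h x)
      (Continuous.intervalIntegrable (by fun_prop) a b)]

/-- Fubini for a region between two graphs over a measurable base set. -/
lemma iter_int (t : Set ℝ) (ht : MeasurableSet t) (l u : ℝ → ℝ)
    (hl : Continuous l) (hu : Continuous u) (f : ℝ × ℝ → ℝ)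
    (hf : IntegrableOn f {p : ℝ × ℝ | p.1 ∈ t ∧ p.2 ∈ Icc (l p.1) (u p.1)}) :
    (∫ p in {p : ℝ × ℝ | p.1 ∈ t ∧ p.2 ∈ Icc (l p.1) (u p.1)}, f p)
      = ∫ x in t, ∫ y in Icc (l x) (u x), f (x, y) := by
  set R : Set (ℝ × ℝ) := {p : ℝ × ℝ | p.1 ∈ t ∧ p.2 ∈ Icc (l p.1) (u p.1)} with hRdef
  have hR : MeasurableSet R := by
    have h1 : MeasurableSet {p : ℝ × ℝ | p.1 ∈ t} := measurable_fst ht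
    have h2 : MeasurableSet {p : ℝ × ℝ | l p.1 ≤ p.2} :=
      measurableSet_le (hl.comp continuous_fst).measurable measurable_snd
    have h3 : MeasurableSet {p : ℝ × ℝ | p.2 ≤ u p.1} :=
      measurableSet_le measurable_snd (hu.comp continuous_fst).measurable
    have : R = {p : ℝ × ℝ | p.1 ∈ t} ∩ ({p : ℝ × ℝ | l p.1 ≤ p.2} ∩ {p : ℝ × ℝ | p.2 ≤ u p.1}) := by
      ext p; simp [hRdef, mem_Icc, and_assoc]
    rw [this]; exact h1.inter (h2.inter h3)
  rw [← integral_indicator hR]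
  have hint : Integrable (R.indicator f) (volume : Measure (ℝ × ℝ)) :=
    (integrable_indicator_iff hR).2 hf
  rw [Measure.volume_eq_prod] at hint ⊢
  rw [integral_prod _ hint]
  have key : ∀ x : ℝ, (∫ y, R.indicator f (x, y)) =
      t.indicator (fun x => ∫ y in Icc (l x) (u x), f (x, y)) x := by
    intro x
    by_cases hx : x ∈ t
    · rw [indicator_of_mem hx, ← integral_indicator measurableSet_Icc]
      congr 1; funext y
      by_cases h : y ∈ Icc (l x) (u x)
      · rw [indicator_of_mem h, indicator_of_mem (show (x, y) ∈ R from ⟨hx, h⟩)]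
      · rw [indicator_of_notMem h, indicator_of_notMem (fun hm => h hm.2)]
    · rw [indicator_of_notMem hx]
      have : ∀ y : ℝ, R.indicator f (x, y) = 0 := by
        intro y; rw [indicator_of_notMem]; simp [hRdef, hx]
      simp [this]
  simp_rw [key]
  exact integral_indicator ht

def Sset18 : Set (ℝ × ℝ) :=
  {p | p.2 ≤ p.1 ∧ -p.1 ≤ p.2 ∧ p.1 - 3 ≤ p.2 ∧ p.1 ≤ 3}

def R1s : Set (ℝ × ℝ) := {p : ℝ × ℝ | p.1 ∈ Icc (0:ℝ) (3/2) ∧ p.2 ∈ Icc (-p.1) p.1}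
def R2s : Set (ℝ × ℝ) := {p : ℝ × ℝ | p.1 ∈ Ioc (3/2:ℝ) 3 ∧ p.2 ∈ Icc (p.1 - 3) p.1}

lemma three_comb_mem {M : Set (ℝ × ℝ)} {p u v w : ℝ × ℝ} (hu : u ∈ M) (hv : v ∈ M) (hw : w ∈ M)
    {α β γ : ℝ} (hα : 0 ≤ α) (hβ : 0 ≤ β) (hγ : 0 ≤ γ) (hsum : α + β + γ = 1)
    (hp : p = α • u + β • v + γ • w) : p ∈ convexHull ℝ M := by
  have := (convex_convexHull ℝ M).sum_mem (t := (Finset.univ : Finset (Fin 3)))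
    (w := ![α, β, γ]) (z := ![u, v, w])
    (by intro i _; fin_cases i <;> simpa)
    (by simp [Fin.sum_univ_three, hsum])
    (by intro i _
        fin_cases i
        · exact subset_convexHull ℝ M hu
        · exact subset_convexHull ℝ M hv
        · exact subset_convexHull ℝ M hw)
  simpa [Fin.sum_univ_three, ← hp] using this

lemma delta18_eq : delta18 = Sset18 := by
  apply le_antisymm
  · apply convexHull_min
    · intro p hp
      simp only [Set.mem_insert_iff, Set.mem_singleton_iff] at hp
      rcases hp with rfl | rfl | rfl | rfl <;>
        refine ⟨by norm_num, by norm_num, by norm_num, by norm_num⟩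
    · rintro p ⟨hp1, hp2, hp3, hp4⟩ q ⟨hq1, hq2, hq3, hq4⟩ a b ha hb hab
      refine ⟨?_, ?_, ?_, ?_⟩ <;>
        simp only [Prod.fst_add, Prod.snd_add, Prod.smul_fst, Prod.smul_snd, smul_eq_mul] <;>
        nlinarith [mul_le_mul_of_nonneg_left hp1 ha, mul_le_mul_of_nonneg_left hq1 hb,
          mul_le_mul_of_nonneg_left hp2 ha, mul_le_mul_of_nonneg_left hq2 hb,
          mul_le_mul_of_nonneg_left hp3 ha, mul_le_mul_of_nonneg_left hq3 hb,
          mul_le_mul_of_nonneg_left hp4 ha, mul_le_mul_of_nonneg_left hq4 hb]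
  · rintro ⟨x, y⟩ ⟨h1, h2, h3, h4⟩
    simp only [Sset18, Set.mem_setOf_eq] at h1 h2 h3 h4
    by_cases hy : 0 ≤ y
    · exact three_comb_mem (M := {((0:ℝ), (0:ℝ)), ((3:ℝ), (3:ℝ)), ((3:ℝ), (0:ℝ)),
        ((3/2:ℝ), (-3/2:ℝ))})
        (u := ((0:ℝ),(0:ℝ))) (v := ((3:ℝ),(3:ℝ))) (w := ((3:ℝ),(0:ℝ)))
        (by simp) (by simp) (by simp)
        (α := 1 - x/3) (β := y/3) (γ := (x - y)/3)
        (by linarith) (by linarith) (by linarith) (by ring)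
        (by apply Prod.ext <;>
          simp only [Prod.fst_add, Prod.snd_add, Prod.smul_fst, Prod.smul_snd, smul_eq_mul,
            Prod.mk.injEq] <;> norm_num <;> ring)
    · exact three_comb_mem (M := {((0:ℝ), (0:ℝ)), ((3:ℝ), (3:ℝ)), ((3:ℝ), (0:ℝ)),
        ((3/2:ℝ), (-3/2:ℝ))})
        (u := ((0:ℝ),(0:ℝ))) (v := ((3:ℝ),(0:ℝ))) (w := ((3/2:ℝ),(-3/2:ℝ)))
        (by simp) (by simp) (by simp)
        (α := 1 - (x - y)/3) (β := (x + y)/3) (γ := -2*y/3)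
        (by linarith) (by linarith) (by linarith) (by ring)
        (by apply Prod.ext <;>
          simp only [Prod.fst_add, Prod.snd_add, Prod.smul_fst, Prod.smul_snd, smul_eq_mul,
            Prod.mk.injEq] <;> norm_num <;> ring)

lemma Sset18_eq_union : Sset18 = R1s ∪ R2s := by
  ext ⟨x, y⟩
  simp only [Sset18, R1s, R2s, Set.mem_setOf_eq, Set.mem_union, mem_Icc, mem_Ioc]
  constructor
  · rintro ⟨h1, h2, h3, h4⟩
    by_cases hx : x ≤ 3/2
    · exact Or.inl ⟨⟨by linarith, hx⟩, h2, h1⟩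
    · exact Or.inr ⟨⟨by linarith, h4⟩, h3, h1⟩
  · rintro (⟨⟨ha, hb⟩, hc, hd⟩ | ⟨⟨ha, hb⟩, hc, hd⟩) <;>
      exact ⟨by linarith, by linarith, by linarith, by linarith⟩

lemma piece_int (f : ℝ × ℝ → ℝ) (hf : Continuous f) :
    (∫ p in Sset18, f p)
      = (∫ x in Icc (0:ℝ) (3/2), ∫ y in Icc (-x) x, f (x, y))
        + ∫ x in Ioc (3/2:ℝ) 3, ∫ y in Icc (x - 3) x, f (x, y) := by
  have hK : IntegrableOn f (Icc (0:ℝ) 3 ×ˢ Icc (-3:ℝ) 3) :=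
    hf.continuousOn.integrableOn_compact (isCompact_Icc.prod isCompact_Icc)
  have h1 : IntegrableOn f R1s := by
    refine hK.mono_set ?_
    rintro ⟨x, y⟩ ⟨⟨ha, hb⟩, hc, hd⟩
    exact ⟨⟨ha, by linarith⟩, by constructor <;> simp at hc hd ⊢ <;> linarith⟩
  have h2 : IntegrableOn f R2s := by
    refine hK.mono_set ?_
    rintro ⟨x, y⟩ ⟨⟨ha, hb⟩, hc, hd⟩
    exact ⟨⟨by linarith, hb⟩, by constructor <;> simp at hc hd ⊢ <;> linarith⟩
  have hR2 : MeasurableSet R2s := by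
    have hA : MeasurableSet {p : ℝ × ℝ | p.1 ∈ Ioc (3/2:ℝ) 3} := measurable_fst measurableSet_Ioc
    have hB : MeasurableSet {p : ℝ × ℝ | p.1 - 3 ≤ p.2} :=
      measurableSet_le (by fun_prop) (by fun_prop)
    have hC : MeasurableSet {p : ℝ × ℝ | p.2 ≤ p.1} :=
      measurableSet_le (by fun_prop) (by fun_prop)
    have : R2s = {p : ℝ × ℝ | p.1 ∈ Ioc (3/2:ℝ) 3} ∩
        ({p : ℝ × ℝ | p.1 - 3 ≤ p.2} ∩ {p : ℝ × ℝ | p.2 ≤ p.1}) := by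
      ext p; simp [R2s, mem_Icc, and_assoc]
    rw [this]; exact hA.inter (hB.inter hC)
  have hdisj : Disjoint R1s R2s := by
    rw [Set.disjoint_left]
    rintro p ⟨⟨_, hb⟩, _⟩ ⟨⟨hc, _⟩, _⟩
    linarith
  rw [Sset18_eq_union, setIntegral_union hdisj hR2 h1 h2]
  have e1 : (∫ p in R1s, f p) = ∫ x in Icc (0:ℝ) (3/2), ∫ y in Icc (-x) x, f (x, y) :=
    iter_int (Icc (0:ℝ) (3/2)) measurableSet_Icc (fun x => -x) (fun x => x)
      (by fun_prop) (by fun_prop) f h1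
  have e2 : (∫ p in R2s, f p) = ∫ x in Ioc (3/2:ℝ) 3, ∫ y in Icc (x - 3) x, f (x, y) :=
    iter_int (Ioc (3/2:ℝ) 3) measurableSet_Ioc (fun x => x - 3) (fun x => x)
      (by fun_prop) (by fun_prop) f h2
  rw [e1, e2]

/-- The barycenter of `delta18` with respect to `(x² - y²)² dp`. -/
noncomputable def bar18 : ℝ × ℝ :=
  ((∫ p in delta18, p.1 * mu18 p) / (∫ p in delta18, mu18 p),
   (∫ p in delta18, p.2 * mu18 p) / (∫ p in delta18, mu18 p))

/-- The cone generated by the positive roots (1,1) and (1,-1) of SO₄. -/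
def cone18 : Set (ℝ × ℝ) :=
  {v | ∃ a c : ℝ, 0 ≤ a ∧ 0 ≤ c ∧
    v = a • (((1:ℝ), (1:ℝ)) : ℝ × ℝ) + c • (((1:ℝ), (-1:ℝ)) : ℝ × ℝ)}

lemma Dval : (∫ p in delta18, mu18 p) = 1701/20 := by
  rw [delta18_eq, piece_int _ (by unfold mu18; fun_prop)]
  have e1 : ∀ x ∈ Icc (0:ℝ) (3/2), (∫ y in Icc (-x) x, mu18 (x, y))
      = 0 + 0*x + 0*x^2 + 0*x^3 + 0*x^4 + (16/15)*x^5 + 0*x^6 := by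
    intro x hx
    rw [integral_Icc_eq_integral_Ioc, ← intervalIntegral.integral_of_le (by linarith [hx.1] : -x ≤ x)]
    rw [show (fun y => mu18 (x, y)) = fun y : ℝ =>
        (x^4 + 0*y + (-(2*x^2))*y^2 + 0*y^3 + 1*y^4 + 0*y^5 + 0*y^6) from
      funext fun y => by simp only [mu18]; ring]
    rw [intpoly]; ring
  have e2 : ∀ x ∈ Ioc (3/2:ℝ) 3, (∫ y in Icc (x - 3) x, mu18 (x, y))
      = 243/5 + (-81)*x + 36*x^2 + 0*x^3 + 0*x^4 + 0*x^5 + 0*x^6 := by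
    intro x hx
    rw [integral_Icc_eq_integral_Ioc, ← intervalIntegral.integral_of_le (by linarith : x - 3 ≤ x)]
    rw [show (fun y => mu18 (x, y)) = fun y : ℝ =>
        (x^4 + 0*y + (-(2*x^2))*y^2 + 0*y^3 + 1*y^4 + 0*y^5 + 0*y^6) from
      funext fun y => by simp only [mu18]; ring]
    rw [intpoly]; ring
  rw [setIntegral_congr_fun measurableSet_Icc e1, setIntegral_congr_fun measurableSet_Ioc e2,
    integral_Icc_eq_integral_Ioc, ← intervalIntegral.integral_of_le (by norm_num : (0:ℝ) ≤ 3/2),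
    ← intervalIntegral.integral_of_le (by norm_num : (3/2:ℝ) ≤ 3), intpoly, intpoly]
  norm_num

lemma Ixval : (∫ p in delta18, p.1 * mu18 p) = 118827/560 := by
  rw [delta18_eq, piece_int _ (by unfold mu18; fun_prop)]
  have e1 : ∀ x ∈ Icc (0:ℝ) (3/2), (∫ y in Icc (-x) x, (x, y).1 * mu18 (x, y))
      = 0 + 0*x + 0*x^2 + 0*x^3 + 0*x^4 + 0*x^5 + (16/15)*x^6 := by
    intro x hx
    rw [integral_Icc_eq_integral_Ioc, ← intervalIntegral.integral_of_le (by linarith [hx.1] : -x ≤ x)]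
    rw [show (fun y => (x, y).1 * mu18 (x, y)) = fun y : ℝ =>
        (x^5 + 0*y + (-(2*x^3))*y^2 + 0*y^3 + x*y^4 + 0*y^5 + 0*y^6) from
      funext fun y => by simp only [mu18]; ring]
    rw [intpoly]; ring
  have e2 : ∀ x ∈ Ioc (3/2:ℝ) 3, (∫ y in Icc (x - 3) x, (x, y).1 * mu18 (x, y))
      = 0 + (243/5)*x + (-81)*x^2 + 36*x^3 + 0*x^4 + 0*x^5 + 0*x^6 := by
    intro x hx
    rw [integral_Icc_eq_integral_Ioc, ← intervalIntegral.integral_of_le (by linarith : x - 3 ≤ x)]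
    rw [show (fun y => (x, y).1 * mu18 (x, y)) = fun y : ℝ =>
        (x^5 + 0*y + (-(2*x^3))*y^2 + 0*y^3 + x*y^4 + 0*y^5 + 0*y^6) from
      funext fun y => by simp only [mu18]; ring]
    rw [intpoly]; ring
  rw [setIntegral_congr_fun measurableSet_Icc e1, setIntegral_congr_fun measurableSet_Ioc e2,
    integral_Icc_eq_integral_Ioc, ← intervalIntegral.integral_of_le (by norm_num : (0:ℝ) ≤ 3/2),
    ← intervalIntegral.integral_of_le (by norm_num : (3/2:ℝ) ≤ 3), intpoly, intpoly]
  norm_num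

lemma Iyval : (∫ p in delta18, p.2 * mu18 p) = 729/16 := by
  rw [delta18_eq, piece_int _ (by unfold mu18; fun_prop)]
  have e1 : ∀ x ∈ Icc (0:ℝ) (3/2), (∫ y in Icc (-x) x, (x, y).2 * mu18 (x, y))
      = 0 + 0*x + 0*x^2 + 0*x^3 + 0*x^4 + 0*x^5 + 0*x^6 := by
    intro x hx
    rw [integral_Icc_eq_integral_Ioc, ← intervalIntegral.integral_of_le (by linarith [hx.1] : -x ≤ x)]
    rw [show (fun y => (x, y).2 * mu18 (x, y)) = fun y : ℝ =>
        (0 + x^4*y + 0*y^2 + (-(2*x^2))*y^3 + 0*y^4 + 1*y^5 + 0*y^6) from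
      funext fun y => by simp only [mu18]; ring]
    rw [intpoly]; ring
  have e2 : ∀ x ∈ Ioc (3/2:ℝ) 3, (∫ y in Icc (x - 3) x, (x, y).2 * mu18 (x, y))
      = -243/2 + 243*x + (-162)*x^2 + 36*x^3 + 0*x^4 + 0*x^5 + 0*x^6 := by
    intro x hx
    rw [integral_Icc_eq_integral_Ioc, ← intervalIntegral.integral_of_le (by linarith : x - 3 ≤ x)]
    rw [show (fun y => (x, y).2 * mu18 (x, y)) = fun y : ℝ =>
        (0 + x^4*y + 0*y^2 + (-(2*x^2))*y^3 + 0*y^4 + 1*y^5 + 0*y^6) from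
      funext fun y => by simp only [mu18]; ring]
    rw [intpoly]; ring
  rw [setIntegral_congr_fun measurableSet_Icc e1, setIntegral_congr_fun measurableSet_Ioc e2,
    integral_Icc_eq_integral_Ioc, ← intervalIntegral.integral_of_le (by norm_num : (0:ℝ) ≤ 3/2),
    ← intervalIntegral.integral_of_le (by norm_num : (3/2:ℝ) ≤ 3), intpoly, intpoly]
  norm_num

lemma bar18_val : bar18 = (489/196, 15/28) := by
  rw [bar18, Dval, Ixval, Iyval]
  norm_num

/-- K-instability of the second smooth Fano compactification of SO₄(ℂ): the
barycenter does NOT lie in the translated cone `2ρ + Ξ`, where `2ρ = (2,0)` and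
`Ξ = Cone((1,1),(1,-1))`. -/
theorem stmt18 :
    bar18 ∉ (fun v => (((2:ℝ), (0:ℝ)) : ℝ × ℝ) + v) '' cone18 := by
  rintro ⟨v, ⟨a, c, ha, hc, rfl⟩, heq⟩
  rw [bar18_val] at heq
  simp only [Prod.ext_iff, Prod.fst_add, Prod.snd_add, Prod.smul_fst, Prod.smul_snd,
    smul_eq_mul, Prod.mk.injEq] at heq
  obtain ⟨h1, h2⟩ := heq
  norm_num at h1 h2
  linarith
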